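/- For real α > -1, y > 0, natural numbers m < n, and with Ī_{m,n}^{(α,β)}(y) = (m!/Γ(m+α+1)) ∫_0^∞ (1+yρ)^{-1} ρ^α e^{-ρ} L_m^{(α)}(ρ) L_n^{(β)}(ρ) dρ, the identity Ī_{m,n}^{(α,α+1)}(y) = 1 - y(α+1) · (m!/(α+1)_m) · L_m^{(α)}(-1/y) · Ī_{0,n}^{(α+1,α+1)}(y) holds. -/

import Mathlib

open MeasureTheory Real Set

/-- Generalized Laguerre polynomial `L_n^{(α)}(x)`. -/
noncomputable def genLaguerre (α : ℝ) (n : ℕ) (x : ℝ) : ℝ :=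
  ∑ j ∈ Finset.range (n + 1),
    (-1 : ℝ) ^ j * (Real.Gamma (α + n + 1) /
      (Real.Gamma (α + j + 1) * (Nat.factorial (n - j)))) * x ^ j / (Nat.factorial j)

/-- The function `I_{m,n}^{(α,β)}(y)`. -/
noncomputable def Imn (α β y : ℝ) (m n : ℕ) : ℝ :=
  ∫ ρ in Ioi (0 : ℝ), (1 + y * ρ)⁻¹ * ρ ^ α * Real.exp (-ρ) *
    genLaguerre α m ρ * genLaguerre β n ρ


/-- The normalized function Ī_(m,n)^(α,β)(y). -/
noncomputable def Ibar (α β y : ℝ) (m n : ℕ) : ℝ :=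
  ((Nat.factorial m : ℝ) / Real.Gamma (m + α + 1)) * Imn α β y m n


/-!
Since `(1 + yρ)⁻¹ ρ^α = ρ^α - y (1 + yρ)⁻¹ ρ^(α+1)`, the integral `I_{m,n}^{(α,α+1)}` splits in two.
In the first piece expand `L_n^{(α+1)} = ∑_{k ≤ n} L_k^{(α)}`: by orthogonality only `k = m`
survives, giving the norm `Γ(α+m+1)/m!` that the normalisation turns into `1`. In the second piece
write `L_m^{(α)}(ρ) = L_m^{(α)}(-1/y) + (ρ + 1/y) R(ρ)` with `deg R < n`: the linear factor cancels
the kernel, and `R` is orthogonal to `L_n^{(α+1)}` for the weight `ρ^(α+1) e^(-ρ)`, which leaves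
`L_m^{(α)}(-1/y) I_{0,n}^{(α+1,α+1)}`.

Orthogonality comes from the moments `∫ ρ^β e^(-ρ) L_n^{(β)}(ρ) ρ^j`, which are, up to a factor,
the `n`-th forward differences of the rising factorial `(β + 1)_j`; these vanish for `j < n`.
-/

open Polynomial
open scoped fwdDiff

theorem Real.Gamma_add_nat_eq_mul_eval_ascPochhammer {x : ℝ} (hx : 0 < x) (n : ℕ) :
    Gamma (x + n) = Gamma x * (ascPochhammer ℝ n).eval x := by
  induction n with
  | zero => simp
  | succ n ih =>
    rw [Nat.cast_succ, ← add_assoc, Gamma_add_one (by positivity), ih, ascPochhammer_succ_eval]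
    ring

lemma eqOn_rpow_mul_exp_neg_mul_pow {β : ℝ} (j : ℕ) :
    EqOn (fun ρ : ℝ => ρ ^ β * exp (-ρ) * ρ ^ j) (fun ρ => exp (-ρ) * ρ ^ (β + j + 1 - 1))
      (Ioi 0) := fun ρ (hρ : 0 < ρ) => by
  simp only [add_sub_cancel_right, rpow_add hρ, rpow_natCast]
  ring

lemma integrableOn_rpow_mul_exp_neg_mul_pow {β : ℝ} (hβ : -1 < β) (j : ℕ) :
    IntegrableOn (fun ρ : ℝ => ρ ^ β * exp (-ρ) * ρ ^ j) (Ioi 0) :=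
  (GammaIntegral_convergent (by linarith [j.cast_nonneg (α := ℝ)] : 0 < β + j + 1)).congr_fun
    (eqOn_rpow_mul_exp_neg_mul_pow j).symm measurableSet_Ioi

lemma integral_rpow_mul_exp_neg_mul_pow {β : ℝ} (hβ : -1 < β) (j : ℕ) :
    ∫ ρ in Ioi 0, ρ ^ β * exp (-ρ) * ρ ^ j = Gamma (β + j + 1) := by
  rw [Gamma_eq_integral (by linarith [j.cast_nonneg (α := ℝ)])]
  exact setIntegral_congr_fun measurableSet_Ioi (eqOn_rpow_mul_exp_neg_mul_pow j)

lemma sum_range_neg_one_pow_mul_choose_mul_eq_fwdDiff_iter {R : Type*} [CommRing R] (f : R → R)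
    (n : ℕ) (x : R) :
    ∑ i ∈ Finset.range (n + 1), (-1) ^ i * (n.choose i : R) * f (x + i) =
      (-1) ^ n * Δ_[1] ^[n] f x := by
  rw [fwdDiff_iter_eq_sum_shift, Finset.mul_sum]
  refine Finset.sum_congr rfl fun i hi => ?_
  have hin : i ≤ n := Nat.lt_succ_iff.mp (Finset.mem_range.mp hi)
  have hsign : ((-1) ^ n * (-1) ^ (n - i) : R) = (-1) ^ i := by
    rw [← pow_add, ← Nat.add_sub_assoc hin, show n + n - i = i + 2 * (n - i) by omega,
      pow_add, pow_mul]
    simp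
  rw [zsmul_eq_mul, nsmul_one]
  push_cast
  linear_combination (n.choose i : R) * f (x + i) * hsign.symm

noncomputable def laguerreCoeff (α : ℝ) (n j : ℕ) : ℝ :=
  (-1) ^ j * (Gamma (α + n + 1) / (Gamma (α + j + 1) * ((n - j).factorial : ℝ))) / j.factorial

lemma genLaguerre_eq_sum (α : ℝ) (n : ℕ) (x : ℝ) :
    genLaguerre α n x = ∑ j ∈ Finset.range (n + 1), laguerreCoeff α n j * x ^ j :=
  Finset.sum_congr rfl fun j _ => by rw [laguerreCoeff]; ring

lemma laguerreCoeff_self {α : ℝ} {n : ℕ} (h : Gamma (α + n + 1) ≠ 0) :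
    laguerreCoeff α n n = (-1) ^ n / n.factorial := by
  simp [laguerreCoeff, h]

lemma genLaguerre_zero {α : ℝ} (h : Gamma (α + 1) ≠ 0) (x : ℝ) : genLaguerre α 0 x = 1 := by
  simp [genLaguerre, h]

lemma laguerreCoeff_add_one_succ {α : ℝ} (hα : -1 < α) {n j : ℕ} (hj : j ≤ n) :
    laguerreCoeff (α + 1) (n + 1) j = laguerreCoeff (α + 1) n j + laguerreCoeff α (n + 1) j := by
  have hj1 : 0 < α + j + 1 := by linarith [j.cast_nonneg (α := ℝ)]
  have hn2 : 0 < α + n + 2 := by linarith [n.cast_nonneg (α := ℝ)]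
  have hΓj := (Gamma_pos_of_pos hj1).ne'
  have hΓn := (Gamma_pos_of_pos hn2).ne'
  have hnj : (n : ℝ) - j + 1 ≠ 0 := by linarith [(Nat.cast_le (α := ℝ)).mpr hj]
  simp only [laguerreCoeff]
  rw [show α + 1 + ↑(n + 1) + 1 = α + n + 2 + 1 by push_cast; ring,
    show α + ↑(n + 1) + 1 = α + n + 2 by push_cast; ring,
    show α + 1 + n + 1 = α + n + 2 by ring, show α + 1 + j + 1 = α + j + 1 + 1 by ring,
    Gamma_add_one hn2.ne', Gamma_add_one hj1.ne', Nat.succ_sub hj, Nat.factorial_succ]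
  push_cast [Nat.cast_sub hj]
  field_simp
  ring

lemma genLaguerre_add_one_succ {α : ℝ} (hα : -1 < α) (n : ℕ) (x : ℝ) :
    genLaguerre (α + 1) (n + 1) x = genLaguerre (α + 1) n x + genLaguerre α (n + 1) x := by
  have htop : laguerreCoeff (α + 1) (n + 1) (n + 1) = laguerreCoeff α (n + 1) (n + 1) := by
    rw [laguerreCoeff_self, laguerreCoeff_self] <;>
      exact (Gamma_pos_of_pos (by push_cast; linarith [n.cast_nonneg (α := ℝ)])).ne'
  simp only [genLaguerre_eq_sum]
  rw [Finset.sum_range_succ, Finset.sum_range_succ _ (n + 1), htop, ← add_assoc,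
    ← Finset.sum_add_distrib]
  congr 1
  refine Finset.sum_congr rfl fun j hj => ?_
  rw [laguerreCoeff_add_one_succ hα (Nat.lt_succ_iff.mp (Finset.mem_range.mp hj)), add_mul]

lemma genLaguerre_add_one_eq_sum {α : ℝ} (hα : -1 < α) (n : ℕ) (x : ℝ) :
    genLaguerre (α + 1) n x = ∑ k ∈ Finset.range (n + 1), genLaguerre α k x := by
  induction n with
  | zero =>
    rw [Finset.sum_range_one, genLaguerre_zero (Gamma_pos_of_pos (by linarith)).ne',
      genLaguerre_zero (Gamma_pos_of_pos (by linarith)).ne']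
  | succ n ih => rw [Finset.sum_range_succ, ← ih, genLaguerre_add_one_succ hα]

noncomputable def laguerrePoly (α : ℝ) (n : ℕ) : ℝ[X] :=
  ∑ j ∈ Finset.range (n + 1), C (laguerreCoeff α n j) * X ^ j

@[simp]
lemma eval_laguerrePoly (α : ℝ) (n : ℕ) (x : ℝ) :
    (laguerrePoly α n).eval x = genLaguerre α n x := by
  simp [laguerrePoly, genLaguerre_eq_sum, eval_finsetSum]

lemma natDegree_laguerrePoly_le (α : ℝ) (n : ℕ) : (laguerrePoly α n).natDegree ≤ n :=
  natDegree_sum_le_of_forall_le _ _ fun j hj =>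
    (natDegree_C_mul_X_pow_le _ j).trans (Nat.lt_succ_iff.mp (Finset.mem_range.mp hj))

lemma coeff_laguerrePoly_self {α : ℝ} {n : ℕ} (h : Gamma (α + n + 1) ≠ 0) :
    (laguerrePoly α n).coeff n = (-1) ^ n / n.factorial := by
  simp [laguerrePoly, laguerreCoeff_self h]

lemma integrableOn_rpow_mul_exp_neg_mul_eval {β : ℝ} (hβ : -1 < β) (P : ℝ[X]) :
    IntegrableOn (fun ρ : ℝ => ρ ^ β * exp (-ρ) * P.eval ρ) (Ioi 0) := by
  simp only [eval_eq_sum_range, Finset.mul_sum]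
  refine integrable_finsetSum _ fun i _ => ?_
  exact IntegrableOn.congr_fun ((integrableOn_rpow_mul_exp_neg_mul_pow hβ i).const_mul _)
    (fun ρ _ => by ring) measurableSet_Ioi

lemma IntegrableOn.inv_one_add_mul_mul {f : ℝ → ℝ} {y : ℝ} (hy : 0 ≤ y)
    (hf : IntegrableOn f (Ioi 0)) :
    IntegrableOn (fun ρ => (1 + y * ρ)⁻¹ * f ρ) (Ioi 0) := by
  refine Integrable.bdd_mul (c := 1) hf (by fun_prop) ?_
  filter_upwards [ae_restrict_mem measurableSet_Ioi] with ρ (hρ : 0 < ρ)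
  have : 1 ≤ 1 + y * ρ := by nlinarith
  rw [norm_inv, Real.norm_of_nonneg (by linarith)]
  exact inv_le_one_of_one_le₀ this

lemma integrableOn_rpow_mul_exp_neg_mul_genLaguerre_mul_eval {β : ℝ} (hβ : -1 < β) (α : ℝ)
    (n : ℕ) (P : ℝ[X]) :
    IntegrableOn (fun ρ : ℝ => ρ ^ β * exp (-ρ) * genLaguerre α n ρ * P.eval ρ) (Ioi 0) := by
  simpa [mul_assoc] using integrableOn_rpow_mul_exp_neg_mul_eval hβ (laguerrePoly α n * P)

lemma integral_rpow_mul_exp_neg_mul_genLaguerre_mul_pow {β : ℝ} (hβ : -1 < β) (n j : ℕ) :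
    ∫ ρ in Ioi 0, ρ ^ β * exp (-ρ) * genLaguerre β n ρ * ρ ^ j =
      Gamma (β + n + 1) / n.factorial *
        ((-1) ^ n * Δ_[1] ^[n] (ascPochhammer ℝ j).eval (β + 1)) := by
  have hexpand : EqOn (fun ρ : ℝ => ρ ^ β * exp (-ρ) * genLaguerre β n ρ * ρ ^ j)
      (fun ρ => ∑ i ∈ Finset.range (n + 1),
        laguerreCoeff β n i * (ρ ^ β * exp (-ρ) * ρ ^ (i + j))) (Ioi 0) := fun ρ _ => by
    simp only [genLaguerre_eq_sum, Finset.mul_sum, Finset.sum_mul, pow_add]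
    exact Finset.sum_congr rfl fun i _ => by ring
  rw [setIntegral_congr_fun measurableSet_Ioi hexpand, integral_finsetSum _ fun i _ =>
      (integrableOn_rpow_mul_exp_neg_mul_pow hβ (i + j)).const_mul _,
    ← sum_range_neg_one_pow_mul_choose_mul_eq_fwdDiff_iter, Finset.mul_sum]
  -- termwise, `Γ(β+i+j+1) = Γ(β+i+1) (β+i+1)_j` and `n! / (i! (n-i)!) = n.choose i`
  refine Finset.sum_congr rfl fun i hi => ?_
  have hin : i ≤ n := Nat.lt_succ_iff.mp (Finset.mem_range.mp hi)
  have hi1 : 0 < β + i + 1 := by linarith [i.cast_nonneg (α := ℝ)]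
  rw [integral_const_mul, integral_rpow_mul_exp_neg_mul_pow hβ,
    show β + ↑(i + j) + 1 = (β + i + 1) + j by push_cast; ring,
    Real.Gamma_add_nat_eq_mul_eval_ascPochhammer hi1, Nat.cast_choose ℝ hin,
    show β + 1 + i = β + i + 1 by ring, laguerreCoeff]
  have := (Gamma_pos_of_pos hi1).ne'
  field_simp

lemma integral_rpow_mul_exp_neg_mul_genLaguerre_mul_pow_of_lt {β : ℝ} (hβ : -1 < β) {n j : ℕ}
    (hj : j < n) :
    ∫ ρ in Ioi 0, ρ ^ β * exp (-ρ) * genLaguerre β n ρ * ρ ^ j = 0 := by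
  rw [integral_rpow_mul_exp_neg_mul_genLaguerre_mul_pow hβ,
    fwdDiff_iter_eq_zero_of_degree_lt (by rwa [ascPochhammer_natDegree])]
  simp

lemma integral_rpow_mul_exp_neg_mul_genLaguerre_mul_pow_self {β : ℝ} (hβ : -1 < β) (n : ℕ) :
    ∫ ρ in Ioi 0, ρ ^ β * exp (-ρ) * genLaguerre β n ρ * ρ ^ n = (-1) ^ n * Gamma (β + n + 1) := by
  have hdiff := (ascPochhammer ℝ n).fwdDiff_iter_degree_eq_factorial
  rw [ascPochhammer_natDegree, (monic_ascPochhammer (S := ℝ) n).leadingCoeff, one_smul] at hdiff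
  rw [integral_rpow_mul_exp_neg_mul_genLaguerre_mul_pow hβ, hdiff]
  have := Nat.cast_ne_zero (R := ℝ) |>.mpr n.factorial_ne_zero
  rw [Pi.natCast_apply]
  field_simp

lemma integral_rpow_mul_exp_neg_mul_genLaguerre_mul_eval {β : ℝ} (hβ : -1 < β) {n : ℕ}
    {P : ℝ[X]} (hP : P.natDegree ≤ n) :
    ∫ ρ in Ioi 0, ρ ^ β * exp (-ρ) * genLaguerre β n ρ * P.eval ρ =
      (-1) ^ n * Gamma (β + n + 1) * P.coeff n := by
  have hexpand : EqOn (fun ρ : ℝ => ρ ^ β * exp (-ρ) * genLaguerre β n ρ * P.eval ρ)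
      (fun ρ => ∑ i ∈ Finset.range (n + 1),
        P.coeff i * (ρ ^ β * exp (-ρ) * genLaguerre β n ρ * ρ ^ i)) (Ioi 0) := fun ρ _ => by
    simp only [eval_eq_sum_range' (Nat.lt_succ_of_le hP), Finset.mul_sum]
    exact Finset.sum_congr rfl fun i _ => by ring
  have hint (i : ℕ) :
      IntegrableOn (fun ρ : ℝ => ρ ^ β * exp (-ρ) * genLaguerre β n ρ * ρ ^ i) (Ioi 0) := by
    simpa using integrableOn_rpow_mul_exp_neg_mul_genLaguerre_mul_eval hβ β n (X ^ i)
  rw [setIntegral_congr_fun measurableSet_Ioi hexpand,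
    integral_finsetSum _ fun i _ => (hint i).const_mul _, Finset.sum_range_succ,
    Finset.sum_eq_zero fun i hi => by
      rw [integral_const_mul, integral_rpow_mul_exp_neg_mul_genLaguerre_mul_pow_of_lt hβ
        (Finset.mem_range.mp hi), mul_zero],
    zero_add, integral_const_mul, integral_rpow_mul_exp_neg_mul_genLaguerre_mul_pow_self hβ]
  ring

lemma integral_rpow_mul_exp_neg_mul_genLaguerre_mul_eval_eq_zero {β : ℝ} (hβ : -1 < β) {n : ℕ}
    {P : ℝ[X]} (hP : P.natDegree < n) :
    ∫ ρ in Ioi 0, ρ ^ β * exp (-ρ) * genLaguerre β n ρ * P.eval ρ = 0 := by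
  rw [integral_rpow_mul_exp_neg_mul_genLaguerre_mul_eval hβ hP.le, coeff_eq_zero_of_natDegree_lt hP,
    mul_zero]

lemma integral_rpow_mul_exp_neg_mul_genLaguerre_mul_genLaguerre {β : ℝ} (hβ : -1 < β) (m k : ℕ) :
    ∫ ρ in Ioi 0, ρ ^ β * exp (-ρ) * genLaguerre β m ρ * genLaguerre β k ρ =
      if m = k then Gamma (β + m + 1) / m.factorial else 0 := by
  rcases lt_trichotomy m k with h | rfl | h
  · rw [if_neg h.ne]
    simp_rw [mul_right_comm _ (genLaguerre β m _), ← eval_laguerrePoly β m]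
    exact integral_rpow_mul_exp_neg_mul_genLaguerre_mul_eval_eq_zero hβ
      ((natDegree_laguerrePoly_le β m).trans_lt h)
  · have hΓ : Gamma (β + m + 1) ≠ 0 := (Gamma_pos_of_pos (by linarith [m.cast_nonneg (α := ℝ)])).ne'
    have h := integral_rpow_mul_exp_neg_mul_genLaguerre_mul_eval hβ (natDegree_laguerrePoly_le β m)
    simp only [eval_laguerrePoly, coeff_laguerrePoly_self hΓ] at h
    rw [if_pos rfl, h, mul_div_assoc', mul_comm, ← mul_assoc, ← mul_pow]
    simp
  · rw [if_neg h.ne']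
    simp_rw [← eval_laguerrePoly β k]
    exact integral_rpow_mul_exp_neg_mul_genLaguerre_mul_eval_eq_zero hβ
      ((natDegree_laguerrePoly_le β k).trans_lt h)

lemma integral_inv_one_add_mul_mul_genLaguerre_mul_eval {β y : ℝ} (hβ : -1 < β) (hy : 0 < y)
    {n : ℕ} {P : ℝ[X]} (hP : P.natDegree < n) :
    ∫ ρ in Ioi 0, (1 + y * ρ)⁻¹ * (ρ ^ β * exp (-ρ) * genLaguerre β n ρ * P.eval ρ) =
      P.eval (-1 / y) * ∫ ρ in Ioi 0, (1 + y * ρ)⁻¹ * (ρ ^ β * exp (-ρ) * genLaguerre β n ρ) := by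
  set c := -1 / y with hc
  set R := P /ₘ (X - C c)
  have hR : R.natDegree < n := by
    rw [natDegree_divByMonic P (monic_X_sub_C c), natDegree_X_sub_C]
    omega
  have hP_eval (ρ : ℝ) : P.eval ρ = P.eval c + (ρ - c) * R.eval ρ := by
    conv_lhs => rw [← modByMonic_add_div P (X - C c), modByMonic_X_sub_C_eq_C_eval]
    simp [R]
  have hsplit : EqOn
      (fun ρ => (1 + y * ρ)⁻¹ * (ρ ^ β * exp (-ρ) * genLaguerre β n ρ * P.eval ρ))
      (fun ρ => P.eval c * ((1 + y * ρ)⁻¹ * (ρ ^ β * exp (-ρ) * genLaguerre β n ρ)) +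
        y⁻¹ * (ρ ^ β * exp (-ρ) * genLaguerre β n ρ * R.eval ρ)) (Ioi 0) := fun ρ (hρ : 0 < ρ) => by
    have : 1 + y * ρ ≠ 0 := by positivity
    dsimp only
    rw [hP_eval ρ, hc]
    field_simp
    ring
  have hint : IntegrableOn (fun ρ => ρ ^ β * exp (-ρ) * genLaguerre β n ρ) (Ioi 0) := by
    simpa using integrableOn_rpow_mul_exp_neg_mul_genLaguerre_mul_eval hβ β n 1
  rw [setIntegral_congr_fun measurableSet_Ioi hsplit,
    integral_add ((IntegrableOn.inv_one_add_mul_mul hy.le hint).const_mul _)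
      ((integrableOn_rpow_mul_exp_neg_mul_genLaguerre_mul_eval hβ β n R).const_mul _),
    integral_const_mul, integral_const_mul,
    integral_rpow_mul_exp_neg_mul_genLaguerre_mul_eval_eq_zero hβ hR, mul_zero, add_zero]

lemma Imn_eq_sub {α β y : ℝ} (hα : -1 < α) (hy : 0 ≤ y) (m n : ℕ) :
    Imn α β y m n =
      (∫ ρ in Ioi 0, ρ ^ α * exp (-ρ) * genLaguerre α m ρ * genLaguerre β n ρ) -
        y * ∫ ρ in Ioi 0, (1 + y * ρ)⁻¹ *
          (ρ ^ (α + 1) * exp (-ρ) * genLaguerre β n ρ * genLaguerre α m ρ) := by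
  have hsplit : EqOn
      (fun ρ => (1 + y * ρ)⁻¹ * ρ ^ α * exp (-ρ) * genLaguerre α m ρ * genLaguerre β n ρ)
      (fun ρ => ρ ^ α * exp (-ρ) * genLaguerre α m ρ * genLaguerre β n ρ -
        y * ((1 + y * ρ)⁻¹ * (ρ ^ (α + 1) * exp (-ρ) * genLaguerre β n ρ * genLaguerre α m ρ)))
      (Ioi 0) := fun ρ (hρ : 0 < ρ) => by
    have : 1 + y * ρ ≠ 0 := by positivity
    dsimp only
    rw [rpow_add_one hρ.ne']
    field_simp
    ring
  have hint₁ := integrableOn_rpow_mul_exp_neg_mul_genLaguerre_mul_eval hα α m (laguerrePoly β n)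
  have hint₂ := IntegrableOn.inv_one_add_mul_mul hy
    (integrableOn_rpow_mul_exp_neg_mul_genLaguerre_mul_eval (by linarith : -1 < α + 1) β n
      (laguerrePoly α m))
  simp only [eval_laguerrePoly] at hint₁ hint₂
  rw [Imn, setIntegral_congr_fun measurableSet_Ioi hsplit, integral_sub hint₁ (hint₂.const_mul y),
    integral_const_mul]

lemma Imn_zero_left {α : ℝ} (h : Gamma (α + 1) ≠ 0) (β y : ℝ) (n : ℕ) :
    Imn α β y 0 n = ∫ ρ in Ioi 0, (1 + y * ρ)⁻¹ * (ρ ^ α * exp (-ρ) * genLaguerre β n ρ) := by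
  simp only [Imn, genLaguerre_zero h, mul_one, mul_assoc]

lemma integral_rpow_mul_exp_neg_mul_genLaguerre_mul_genLaguerre_add_one {α : ℝ} (hα : -1 < α)
    {m n : ℕ} (hmn : m ≤ n) :
    ∫ ρ in Ioi 0, ρ ^ α * exp (-ρ) * genLaguerre α m ρ * genLaguerre (α + 1) n ρ =
      Gamma (α + m + 1) / m.factorial := by
  have hint (k : ℕ) := integrableOn_rpow_mul_exp_neg_mul_genLaguerre_mul_eval hα α m
    (laguerrePoly α k)
  simp only [eval_laguerrePoly] at hint
  simp_rw [genLaguerre_add_one_eq_sum hα n, Finset.mul_sum]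
  rw [integral_finsetSum _ fun k _ => hint k]
  simp_rw [integral_rpow_mul_exp_neg_mul_genLaguerre_mul_genLaguerre hα]
  rw [Finset.sum_ite_eq, if_pos (Finset.mem_range.mpr (Nat.lt_succ_of_le hmn))]

theorem Ibar_alpha_alphaPlusOne (α y : ℝ) (hα : -1 < α) (hy : 0 < y)
    (m n : ℕ) (hmn : m < n) :
    Ibar α (α + 1) y m n =
      1 - y * (α + 1) * ((Nat.factorial m : ℝ) * Real.Gamma (α + 1) / Real.Gamma (α + 1 + m)) *
        genLaguerre α m (-1 / y) * Ibar (α + 1) (α + 1) y 0 n := by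
  have hα₁ : 0 < α + 1 := by linarith
  have hΓm : Gamma (α + m + 1) ≠ 0 := (Gamma_pos_of_pos (by linarith [m.cast_nonneg (α := ℝ)])).ne'
  have hΓ₁ := (Gamma_pos_of_pos hα₁).ne'
  have hΓ₂ : Gamma (α + 1 + 1) ≠ 0 := (Gamma_pos_of_pos (by linarith)).ne'
  rw [Ibar, Ibar, Imn_eq_sub hα hy.le, Imn_zero_left hΓ₂,
    integral_rpow_mul_exp_neg_mul_genLaguerre_mul_genLaguerre_add_one hα hmn.le]
  simp_rw [← eval_laguerrePoly α m]
  rw [integral_inv_one_add_mul_mul_genLaguerre_mul_eval (by linarith) hy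
    ((natDegree_laguerrePoly_le α m).trans_lt hmn),
    show (m : ℝ) + α + 1 = α + m + 1 by ring, show α + 1 + (m : ℝ) = α + m + 1 by ring,
    Nat.cast_zero, zero_add, Gamma_add_one hα₁.ne']
  field_simp
  ring
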